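/- Law of iterated upper expectations: for every global variable f : Ω → ℝ̄ and every situation s of length n, E_V(f|s) = E_V(g|s), where g : Ω → ℝ̄ is the global variable defined by g(ω) := E_V(f | s·ω_{n+1}), with ω_{n+1} the (n+1)-th state of the path ω and s·ω_{n+1} the situation s extended by ω_{n+1}. -/
import Mathlib


open Filter Topology

noncomputable section

/-- Addition on the extended reals with the convention `(+∞) + (−∞) = (−∞) + (+∞) = +∞`. -/
def eadd (a b : EReal) : EReal := if a = ⊤ ∨ b = ⊤ then ⊤ else a + b

/-- An extended real variable is bounded below. -/
def BddBelowF {Y : Type*} (f : Y → EReal) : Prop := ∃ M : ℝ, ∀ y, (M : EReal) ≤ f y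

/-- (E1): constants are preserved. -/
def UE1 {Y : Type*} (E : (Y → EReal) → EReal) : Prop :=
  ∀ c : ℝ, E (fun _ => (c : EReal)) = (c : EReal)

/-- (E2): sub-additivity on bounded below variables. -/
def UE2 {Y : Type*} (E : (Y → EReal) → EReal) : Prop :=
  ∀ f g : Y → EReal, BddBelowF f → BddBelowF g →
    E (fun y => eadd (f y) (g y)) ≤ eadd (E f) (E g)

/-- (E3): positive homogeneity on bounded below variables. -/
def UE3 {Y : Type*} (E : (Y → EReal) → EReal) : Prop :=
  ∀ l : ℝ, 0 < l → ∀ f : Y → EReal, BddBelowF f →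
    E (fun y => (l : EReal) * f y) = (l : EReal) * E f

/-- (E4): monotonicity on bounded below variables. -/
def UE4 {Y : Type*} (E : (Y → EReal) → EReal) : Prop :=
  ∀ f g : Y → EReal, BddBelowF f → BddBelowF g → (∀ y, f y ≤ g y) → E f ≤ E g

/-- (E5): continuity with respect to non-decreasing sequences of non-negative variables. -/
def UE5 {Y : Type*} (E : (Y → EReal) → EReal) : Prop :=
  ∀ (fs : ℕ → Y → EReal) (f : Y → EReal),
    (∀ n y, 0 ≤ fs n y) → (∀ n y, fs n y ≤ fs (n + 1) y) →
    (∀ y, Tendsto (fun n => fs n y) atTop (𝓝 (f y))) →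
    Tendsto (fun n => E (fs n)) atTop (𝓝 (E f))

/-- An upper expectation: a map satisfying (E1)–(E5). -/
def IsUpperExpectation {Y : Type*} (E : (Y → EReal) → EReal) : Prop :=
  UE1 E ∧ UE2 E ∧ UE3 E ∧ UE4 E ∧ UE5 E

/-- The situation formed by the first `n` states of the path `ω`. -/
def pfx {X : Type*} (ω : ℕ → X) (n : ℕ) : List X := List.ofFn (fun i : Fin n => ω i)

/-- The cylinder event of all paths that go through the situation `s`. -/
def Gamma {X : Type*} (s : List X) : Set (ℕ → X) := {ω | pfx ω s.length = s}

/-- A process is bounded below. -/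
def BddBelowP {X : Type*} (M : List X → EReal) : Prop := ∃ B : ℝ, ∀ t, (B : EReal) ≤ M t

/-- A supermartingale for the imprecise probabilities tree `Q`. -/
def IsSupermartingale {X : Type*} (Q : List X → (X → EReal) → EReal)
    (M : List X → EReal) : Prop :=
  ∀ s : List X, Q s (fun x => M (s ++ [x])) ≤ M s

/-- The pathwise limit inferior of a process. -/
def liminfP {X : Type*} (M : List X → EReal) (ω : ℕ → X) : EReal :=
  Filter.liminf (fun n => M (pfx ω n)) atTop

/-- The game-theoretic upper expectation `E_V(f | s)`. -/
def upExp {X : Type*} (Q : List X → (X → EReal) → EReal)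
    (f : (ℕ → X) → EReal) (s : List X) : EReal :=
  sInf {x : EReal | ∃ M : List X → EReal, IsSupermartingale Q M ∧ BddBelowP M ∧
    (∀ ω ∈ Gamma s, f ω ≤ liminfP M ω) ∧ M s = x}

/-- An event `A` is strictly almost sure within `Γ(s)`: some `s`-test supermartingale
converges to `+∞` on every path of `Γ(s)` outside `A`. -/
def StrictlyAS {X : Type*} (Q : List X → (X → EReal) → EReal) (s : List X)
    (A : Set (ℕ → X)) : Prop :=
  ∃ T : List X → EReal, IsSupermartingale Q T ∧ (∀ t, 0 ≤ T t) ∧ T s = 1 ∧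
    ∀ ω ∈ Gamma s, ω ∉ A → Tendsto (fun n => T (pfx ω n)) atTop (𝓝 (⊤ : EReal))

/-- An `n`-measurable global variable only depends on the first `n` states. -/
def NMeasurable {X : Type*} (n : ℕ) (f : (ℕ → X) → EReal) : Prop :=
  ∀ ω ω' : ℕ → X, pfx ω n = pfx ω' n → f ω = f ω'

/-- A finitary global variable is `n`-measurable for some `n`. -/
def Finitary {X : Type*} (f : (ℕ → X) → EReal) : Prop := ∃ n : ℕ, NMeasurable n f

/-- The bounded below global variables that are pointwise limits of finitary variables. -/
def VbLim {X : Type*} : Set ((ℕ → X) → EReal) :=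
  {f | BddBelowF f ∧ ∃ gs : ℕ → (ℕ → X) → EReal, (∀ n, Finitary (gs n)) ∧
    ∀ ω, Tendsto (fun n => gs n ω) atTop (𝓝 (f ω))}

section Auxil

open Filter

variable {X : Type*}

lemma pfx_length (ω : ℕ → X) (n : ℕ) : (pfx ω n).length = n := by simp [pfx]

lemma pfx_succ (ω : ℕ → X) (n : ℕ) : pfx ω (n + 1) = pfx ω n ++ [ω n] := by
  rw [pfx, List.ofFn_succ', List.concat_eq_append]
  rfl

lemma pfx_prefix (ω : ℕ → X) {a b : ℕ} (h : a ≤ b) : pfx ω a <+: pfx ω b := by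
  induction b, h using Nat.le_induction with
  | base => exact List.prefix_refl _
  | succ b hb ih => exact ih.trans (by rw [pfx_succ]; exact List.prefix_append _ _)

lemma pfx_getD (ω : ℕ → X) {m n : ℕ} (h : m < n) (d : X) :
    (pfx ω n).getD m d = ω m := by
  rw [List.getD_eq_getElem _ _ (by simpa [pfx_length] using h)]
  simp [pfx]

lemma pfx_eq_of_getD (ω : ℕ → X) (l : List X) (h : ∀ i, i < l.length → ∀ hi : i < l.length, ω i = l[i]) :
    pfx ω l.length = l := by
  apply List.ext_getElem (by simp [pfx_length])
  intro i h1 h2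
  simp only [pfx, List.getElem_ofFn]
  exact h i h2 h2

lemma mem_Gamma_iff {s : List X} {ω : ℕ → X} : ω ∈ Gamma s ↔ pfx ω s.length = s := Iff.rfl

lemma Gamma_concat {s : List X} {x : X} {ω : ℕ → X} :
    ω ∈ Gamma (s ++ [x]) ↔ ω ∈ Gamma s ∧ ω s.length = x := by
  simp only [mem_Gamma_iff, List.length_append, List.length_singleton, pfx_succ]
  constructor
  · intro h
    have := List.append_inj' h (by simp)
    exact ⟨this.1, by simpa using this.2⟩
  · rintro ⟨h1, h2⟩; rw [h1, h2]

lemma prefix_concat_cases {s t : List X} {y : X} (h : s <+: t ++ [y]) :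
    s <+: t ∨ s = t ++ [y] := by
  obtain ⟨r, hr⟩ := h
  rcases List.eq_nil_or_concat r with rfl | ⟨r', y', rfl⟩
  · right; simpa using hr
  · left
    rw [List.concat_eq_append, ← List.append_assoc] at hr
    exact ⟨r', by simpa using (List.append_inj' hr rfl).1⟩

lemma IsPrefix.getD_eq {l₁ l₂ : List X} (h : l₁ <+: l₂) {i : ℕ} (hi : i < l₁.length) (d : X) :
    l₂.getD i d = l₁.getD i d := by
  obtain ⟨r, rfl⟩ := h
  exact List.getD_append _ _ _ _ hi

lemma concat_getD_prefix {s t : List X} (h : s <+: t) (hl : s.length < t.length) (d : X) :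
    s ++ [t.getD s.length d] <+: t := by
  obtain ⟨r, rfl⟩ := h
  rcases r with _ | ⟨a, r'⟩
  · simp at hl
  · have : (s ++ a :: r').getD s.length d = a := by
      rw [List.getD_append_right _ _ _ _ le_rfl]
      simp
    rw [this]
    exact ⟨r', by simp⟩

lemma getD_concat_self (s : List X) (x : X) (d : X) : (s ++ [x]).getD s.length d = x := by
  rw [List.getD_append_right _ _ _ _ le_rfl]; simp

end Auxil
section Auxil2

open Filter

variable {X Y : Type*}

lemma eadd_coe {a : EReal} (ha : a ≠ ⊤) (ε : ℝ) : eadd a ε = a + ε := by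
  rw [eadd, if_neg]; push_neg; exact ⟨ha, EReal.coe_ne_top ε⟩

lemma eadd_mono_left {a b : EReal} (h : a ≤ b) (c : EReal) : eadd a c ≤ eadd b c := by
  by_cases hc : c = ⊤
  · simp [eadd, hc]
  by_cases hb : b = ⊤
  · simp [eadd, hb]
  have ha : a ≠ ⊤ := fun h' => hb (top_le_iff.mp (h' ▸ h))
  rw [eadd, if_neg (by tauto), eadd, if_neg (by tauto)]
  exact add_le_add h le_rfl

lemma le_eadd_self {a : EReal} {ε : ℝ} (hε : 0 ≤ ε) : a ≤ eadd a ε := by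
  by_cases ha : a = ⊤
  · simp [eadd, ha]
  rw [eadd_coe ha]
  calc a = a + 0 := by rw [add_zero]
  _ ≤ a + ε := add_le_add le_rfl (by exact_mod_cast hε)

/-- The `ε`-conclusion principle. -/
lemma le_of_forall_le_eadd {a b : EReal} (hb : b ≠ ⊥)
    (h : ∀ ε : ℝ, 0 < ε → a ≤ eadd b ε) : a ≤ b := by
  by_cases hbt : b = ⊤
  · exact hbt ▸ le_top
  by_contra hab
  push_neg at hab
  obtain ⟨r, hr1, hr2⟩ := EReal.exists_between_coe_real hab
  have hbr : b = (b.toReal : EReal) := (EReal.coe_toReal hbt hb).symm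
  have hlt : b.toReal < r := by exact_mod_cast hbr ▸ hr1
  have := h (r - b.toReal) (by linarith)
  rw [eadd_coe hbt] at this
  have : a ≤ (r : EReal) := by
    refine this.trans_eq ?_
    rw [hbr]
    norm_cast
    simp
  exact absurd (this.trans_lt hr2) (lt_irrefl _)

lemma bddBelowF_of_finite [Finite Y] [Nonempty Y] {f : Y → EReal} (h : ∀ y, f y ≠ ⊥) :
    BddBelowF f := by
  have h' : ∀ y, ∃ r : ℝ, (r : EReal) ≤ f y := by
    intro y
    obtain ⟨r, hr⟩ := EReal.exists_between_coe_real (Ne.bot_lt (h y))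
    exact ⟨r, hr.2.le⟩
  choose r hr using h'
  have : ∃ y₀, ∀ y, r y₀ ≤ r y := Finite.exists_min r
  obtain ⟨y₀, hy₀⟩ := this
  exact ⟨r y₀, fun y => le_trans (by exact_mod_cast hy₀ y) (hr y)⟩

lemma Q_const (E : (Y → EReal) → EReal) (hE : IsUpperExpectation E) (c : ℝ) :
    E (fun _ => (c : EReal)) = (c : EReal) := hE.1 c

lemma Q_mono (E : (Y → EReal) → EReal) (hE : IsUpperExpectation E) {f g : Y → EReal}
    (hf : BddBelowF f) (hg : BddBelowF g) (h : ∀ y, f y ≤ g y) : E f ≤ E g :=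
  hE.2.2.2.1 f g hf hg h

lemma Q_eadd_const (E : (Y → EReal) → EReal) (hE : IsUpperExpectation E) (f : Y → EReal)
    (hf : BddBelowF f) (ε : ℝ) : E (fun y => eadd (f y) ε) ≤ eadd (E f) ε := by
  have h2 := hE.2.1 f (fun _ => (ε : EReal)) hf ⟨ε, fun _ => le_rfl⟩
  rwa [hE.1 ε] at h2

lemma Q_const_le (E : (Y → EReal) → EReal) (hE : IsUpperExpectation E) {v : EReal}
    (hv : v ≠ ⊥) : E (fun _ => v) ≤ v := by
  by_cases hvt : v = ⊤
  · exact hvt ▸ le_top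
  · refine le_of_eq ?_
    calc E (fun _ => v) = E (fun _ => (v.toReal : EReal)) := by rw [EReal.coe_toReal hvt hv]
    _ = (v.toReal : EReal) := hE.1 _
    _ = v := EReal.coe_toReal hvt hv

end Auxil2
section Auxil3

open Filter

variable {X : Type*} [Fintype X] [Nonempty X]
variable {Q : List X → (X → EReal) → EReal}

lemma exists_child_le (hQ : ∀ s : List X, IsUpperExpectation (Q s)) {M : List X → EReal}
    (hM : IsSupermartingale Q M) (hb : BddBelowP M) (t : List X) :
    ∃ y : X, M (t ++ [y]) ≤ M t := by
  by_contra hc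
  push_neg at hc
  obtain ⟨B, hB⟩ := hb
  obtain ⟨y₀, hy₀⟩ := Finite.exists_min (fun y => M (t ++ [y]))
  obtain ⟨r, hr1, hr2⟩ := EReal.exists_between_coe_real (hc y₀)
  have hrQ : (r : EReal) ≤ Q t (fun y => M (t ++ [y])) := by
    calc (r : EReal) = Q t (fun _ => (r : EReal)) := ((hQ t).1 r).symm
    _ ≤ Q t (fun y => M (t ++ [y])) :=
      Q_mono _ (hQ t) ⟨r, fun _ => le_rfl⟩ ⟨B, fun y => hB _⟩
        (fun y => hr2.le.trans (hy₀ y))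
  exact absurd (hrQ.trans (hM t)) hr1.not_ge

/-- Along some path through `t`, the liminf of a bounded below supermartingale
does not exceed its value at `t`. -/
lemma exists_path_liminf_le (hQ : ∀ s : List X, IsUpperExpectation (Q s)) {M : List X → EReal}
    (hM : IsSupermartingale Q M) (hb : BddBelowP M) (t : List X) :
    ∃ ω ∈ Gamma t, liminfP M ω ≤ M t := by
  classical
  choose y hy using fun u => exists_child_le hQ hM hb u
  set L : ℕ → List X := fun k => Nat.rec t (fun _ u => u ++ [y u]) k with hL
  have hLsucc : ∀ k, L (k + 1) = L k ++ [y (L k)] := fun k => rfl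
  have hLlen : ∀ k, (L k).length = t.length + k := by
    intro k; induction k with
    | zero => rfl
    | succ k ih => rw [hLsucc, List.length_append, ih]; simp; omega
  have hLle : ∀ k, M (L k) ≤ M t := by
    intro k; induction k with
    | zero => exact le_rfl
    | succ k ih => exact (hy (L k)).trans ih
  have hLpre : ∀ {a b : ℕ}, a ≤ b → L a <+: L b := by
    intro a b h
    induction b, h using Nat.le_induction with
    | base => exact List.prefix_refl _
    | succ b hb ih => exact ih.trans (by rw [hLsucc]; exact List.prefix_append _ _)
  have d : X := Classical.arbitrary X
  set ω : ℕ → X := fun m => (L (m + 1)).getD m d with hω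
  have hωm : ∀ k m, m < (L k).length → ω m = (L k).getD m d := by
    intro k m hm
    show (L (m + 1)).getD m d = (L k).getD m d
    rcases le_total k (m + 1) with h | h
    · exact IsPrefix.getD_eq (hLpre h) hm d
    · exact (IsPrefix.getD_eq (hLpre h) (by have := hLlen (m+1); omega) d).symm
  have hpfx : ∀ k, pfx ω (t.length + k) = L k := by
    intro k; induction k with
    | zero =>
      have := pfx_eq_of_getD ω (L 0) ?_
      · rwa [hLlen 0, Nat.add_zero] at this
      · intro i hi hi'
        rw [hωm 0 i hi', List.getD_eq_getElem _ _ hi']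
    | succ k ih =>
      rw [← Nat.add_assoc, pfx_succ, ih, hLsucc]
      congr 1
      rw [hωm (k + 1) (t.length + k) (by have := hLlen (k+1); omega), hLsucc,
        show t.length + k = (L k).length from (hLlen k).symm, getD_concat_self]
  have hωΓ : ω ∈ Gamma t := by
    have := hpfx 0
    rwa [Nat.add_zero] at this
  refine ⟨ω, hωΓ, ?_⟩
  have hev : ∀ᶠ m in atTop, M (pfx ω m) ≤ M t := by
    filter_upwards [eventually_ge_atTop t.length] with m hm
    have : pfx ω m = L (m - t.length) := by
      rw [← hpfx (m - t.length)]
      congr 1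
      omega
    rw [this]
    exact hLle _
  exact (liminf_le_limsup).trans (limsup_le_of_le (by isBoundedDefault) hev)

/-- Lemma A: a bounded below supermartingale dominates at `t` any constant lower
bound of its liminf on `Γ(t)`. -/
lemma le_supermartingale_of_liminf (hQ : ∀ s : List X, IsUpperExpectation (Q s))
    {M : List X → EReal} (hM : IsSupermartingale Q M) (hb : BddBelowP M) (t : List X)
    {c : EReal} (h : ∀ ω ∈ Gamma t, c ≤ liminfP M ω) : c ≤ M t := by
  obtain ⟨ω, hω, hle⟩ := exists_path_liminf_le hQ hM hb t
  exact (h ω hω).trans hle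

end Auxil3
/-- the law of iterated upper expectations,
`E_V(f|s) = E_V( ω ↦ E_V(f | s·ω_{n+1}) | s)` with `n = |s|`. -/
theorem stmt7 {X : Type*} [Fintype X] [Nonempty X]
    (Q : List X → (X → EReal) → EReal) (hQ : ∀ s : List X, IsUpperExpectation (Q s))
    (f : (ℕ → X) → EReal) (s : List X) :
    upExp Q f s = upExp Q (fun ω => upExp Q f (s ++ [ω s.length])) s := by
  classical
  have d : X := Classical.arbitrary X
  apply le_antisymm
  · -- `upExp f s ≤ upExp g s`
    apply le_sInf
    rintro b ⟨N, hNs, hNb, hNg, rfl⟩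
    obtain ⟨BN, hBN⟩ := hNb
    have hNbot : ∀ t, N t ≠ ⊥ := fun t h => EReal.coe_ne_bot BN (le_bot_iff.mp (h ▸ hBN t))
    refine le_of_forall_le_eadd (hNbot s) ?_
    intro ε hε
    have key : ∀ x : X, upExp Q f (s ++ [x]) ≤ N (s ++ [x]) := by
      intro x
      apply le_supermartingale_of_liminf hQ hNs ⟨BN, hBN⟩ (s ++ [x])
      intro ω hω
      obtain ⟨hω1, hω2⟩ := Gamma_concat.mp hω
      have h5 : upExp Q f (s ++ [ω s.length]) ≤ liminfP N ω := hNg ω hω1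
      rwa [hω2] at h5
    have hMx : ∀ x : X, ∃ Mx : List X → EReal, IsSupermartingale Q Mx ∧ BddBelowP Mx ∧
        (∀ ω ∈ Gamma (s ++ [x]), f ω ≤ liminfP Mx ω) ∧
        Mx (s ++ [x]) ≤ eadd (N (s ++ [x])) ε := by
      intro x
      by_cases hcx : upExp Q f (s ++ [x]) = ⊤
      · refine ⟨fun _ => ⊤, fun t => le_top, ⟨0, fun t => le_top⟩, ?_, ?_⟩
        · intro ω hω
          exact le_liminf_of_le (by isBoundedDefault)
            (Filter.Eventually.of_forall (fun m => le_top))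
        · have hNt : N (s ++ [x]) = ⊤ := top_le_iff.mp (hcx ▸ key x)
          rw [hNt, eadd, if_pos (Or.inl rfl)]
      · have hlt : upExp Q f (s ++ [x]) < eadd (N (s ++ [x])) ε := by
          by_cases hNt : N (s ++ [x]) = ⊤
          · rw [hNt, eadd, if_pos (Or.inl rfl)]
            exact lt_top_iff_ne_top.mpr hcx
          · refine lt_of_le_of_lt (key x) ?_
            rw [eadd_coe hNt]
            have hco : N (s ++ [x]) = ((N (s ++ [x])).toReal : EReal) :=
              (EReal.coe_toReal hNt (hNbot _)).symm
            rw [hco]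
            norm_cast
            linarith
        rw [upExp] at hlt
        obtain ⟨a, ⟨Mx, h1, h2, h3, rfl⟩, h4⟩ := sInf_lt_iff.mp hlt
        exact ⟨Mx, h1, h2, h3, h4.le⟩
    choose Mx hMx1 hMx2 hMx3 hMx4 using hMx
    have hMxbot : ∀ (x : X) (t : List X), Mx x t ≠ ⊥ := by
      intro x t h
      obtain ⟨B, hB⟩ := hMx2 x
      exact EReal.coe_ne_bot B (le_bot_iff.mp (h ▸ hB t))
    set P : List X → EReal := fun t =>
      if s.length + 1 ≤ t.length ∧ s <+: t then Mx (t.getD s.length d) t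
      else eadd (N t) ε with hP
    have hPs : IsSupermartingale Q P := by
      intro t
      by_cases hA : s.length + 1 ≤ t.length ∧ s <+: t
      · have hch : ∀ y : X, P (t ++ [y]) = Mx (t.getD s.length d) (t ++ [y]) := by
          intro y
          rw [hP]; dsimp only
          rw [if_pos ⟨by simp; omega, hA.2.trans (List.prefix_append _ _)⟩,
            List.getD_append _ _ _ _ (by omega)]
        have hPt : P t = Mx (t.getD s.length d) t := by
          rw [hP]; dsimp only; rw [if_pos hA]
        calc Q t (fun y => P (t ++ [y]))
            = Q t (fun y => Mx (t.getD s.length d) (t ++ [y])) := by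
              congr 1; funext y; exact hch y
        _ ≤ Mx (t.getD s.length d) t := hMx1 _ t
        _ = P t := hPt.symm
      · by_cases hts : t = s
        · subst hts
          have hch : ∀ y : X, P (t ++ [y]) = Mx y (t ++ [y]) := by
            intro y
            rw [hP]; dsimp only
            rw [if_pos ⟨by simp, List.prefix_append _ _⟩, getD_concat_self]
          have hPt : P t = eadd (N t) ε := by
            rw [hP]; dsimp only; rw [if_neg (fun h => absurd h.1 (by omega))]
          calc Q t (fun y => P (t ++ [y])) = Q t (fun y => Mx y (t ++ [y])) := by
                congr 1; funext y; exact hch y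
          _ ≤ Q t (fun y => eadd (N (t ++ [y])) ε) :=
              Q_mono _ (hQ t) (bddBelowF_of_finite (fun y => hMxbot y _))
                ⟨BN, fun y => (hBN _).trans (le_eadd_self hε.le)⟩
                (fun y => hMx4 y)
          _ ≤ eadd (Q t (fun y => N (t ++ [y]))) ε :=
              Q_eadd_const _ (hQ t) _ ⟨BN, fun y => hBN _⟩ ε
          _ ≤ eadd (N t) ε := eadd_mono_left (hNs t) _
          _ = P t := hPt.symm
        · have hch : ∀ y : X, P (t ++ [y]) = eadd (N (t ++ [y])) ε := by
            intro y
            rw [hP]; dsimp only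
            rw [if_neg]
            rintro ⟨h1, h2⟩
            have h1' : s.length ≤ t.length := by simp at h1; omega
            rcases prefix_concat_cases h2 with h3 | h3
            · rcases Nat.lt_or_ge t.length (s.length + 1) with h4 | h4
              · exact hts (h3.eq_of_length (by omega)).symm
              · exact hA ⟨h4, h3⟩
            · have := congrArg List.length h3
              simp at this
              omega
          have hPt : P t = eadd (N t) ε := by rw [hP]; dsimp only; rw [if_neg hA]
          calc Q t (fun y => P (t ++ [y])) = Q t (fun y => eadd (N (t ++ [y])) ε) := by
                congr 1; funext y; exact hch y
          _ ≤ eadd (Q t (fun y => N (t ++ [y]))) ε :=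
              Q_eadd_const _ (hQ t) _ ⟨BN, fun y => hBN _⟩ ε
          _ ≤ eadd (N t) ε := eadd_mono_left (hNs t) _
          _ = P t := hPt.symm
    have hPb : BddBelowP P := by
      choose Bx hBx using fun x => hMx2 x
      obtain ⟨x₀, hx₀⟩ := Finite.exists_min Bx
      refine ⟨min BN (Bx x₀), fun t => ?_⟩
      rw [hP]; dsimp only
      split_ifs with h
      · have h' : min BN (Bx x₀) ≤ Bx (t.getD s.length d) :=
          le_trans (min_le_right _ _) (hx₀ _)
        exact le_trans (by exact_mod_cast h') (hBx _ t)
      · exact le_trans (by exact_mod_cast min_le_left BN (Bx x₀))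
          ((hBN t).trans (le_eadd_self hε.le))
    have hPf : ∀ ω ∈ Gamma s, f ω ≤ liminfP P ω := by
      intro ω hω
      have hωx : ω ∈ Gamma (s ++ [ω s.length]) := Gamma_concat.mpr ⟨hω, rfl⟩
      have hev : ∀ᶠ m in Filter.atTop, P (pfx ω m) = Mx (ω s.length) (pfx ω m) := by
        filter_upwards [Filter.eventually_ge_atTop (s.length + 1)] with m hm
        have hpre : s <+: pfx ω m := by
          have h6 := pfx_prefix ω (show s.length ≤ m by omega)
          rwa [mem_Gamma_iff.mp hω] at h6
        rw [hP]; dsimp only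
        rw [if_pos ⟨by rw [pfx_length]; exact hm, hpre⟩, pfx_getD ω (by omega) d]
      have hlim : liminfP P ω = liminfP (Mx (ω s.length)) ω := by
        simp only [liminfP]
        exact Filter.liminf_congr hev
      rw [hlim]
      exact hMx3 _ ω hωx
    have hPval : P s = eadd (N s) ε := by
      rw [hP]; dsimp only; rw [if_neg (fun h => absurd h.1 (by omega))]
    calc upExp Q f s ≤ P s := sInf_le ⟨P, hPs, hPb, hPf, rfl⟩
    _ = eadd (N s) ε := hPval
  · -- `upExp g s ≤ upExp f s`
    apply le_sInf
    rintro a ⟨M, hMs, hMb, hMf, rfl⟩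
    obtain ⟨B, hB⟩ := hMb
    have hcM : ∀ x : X, upExp Q f (s ++ [x]) ≤ M (s ++ [x]) := by
      intro x
      exact sInf_le ⟨M, hMs, ⟨B, hB⟩, fun ω hω => hMf ω (Gamma_concat.mp hω).1, rfl⟩
    set v : X → EReal := fun x =>
      if upExp Q f (s ++ [x]) = ⊥ then (B : EReal) else upExp Q f (s ++ [x]) with hv
    have hv1 : ∀ x, upExp Q f (s ++ [x]) ≤ v x := by
      intro x; rw [hv]; dsimp only; split_ifs with h
      · rw [h]; exact bot_le
      · exact le_rfl
    have hv2 : ∀ x, v x ≤ M (s ++ [x]) := by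
      intro x; rw [hv]; dsimp only; split_ifs with h
      · exact hB _
      · exact hcM x
    have hv3 : ∀ x, v x ≠ ⊥ := by
      intro x; rw [hv]; dsimp only; split_ifs with h
      · exact EReal.coe_ne_bot B
      · exact h
    set P : List X → EReal := fun t =>
      if s.length + 1 < t.length ∧ s <+: t then v (t.getD s.length d) else M t with hP
    have hPs : IsSupermartingale Q P := by
      intro t
      by_cases h1 : s.length + 1 < t.length ∧ s <+: t
      · have hch : ∀ y : X, P (t ++ [y]) = v (t.getD s.length d) := by
          intro y
          rw [hP]; dsimp only
          rw [if_pos ⟨by simp; omega, h1.2.trans (List.prefix_append _ _)⟩,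
            List.getD_append _ _ _ _ (by omega)]
        have hPt : P t = v (t.getD s.length d) := by rw [hP]; dsimp only; rw [if_pos h1]
        calc Q t (fun y => P (t ++ [y])) = Q t (fun _ => v (t.getD s.length d)) := by
              congr 1; funext y; exact hch y
        _ ≤ v (t.getD s.length d) := Q_const_le _ (hQ t) (hv3 _)
        _ = P t := hPt.symm
      · by_cases h2 : t.length = s.length + 1 ∧ s <+: t
        · obtain ⟨x, rfl⟩ : ∃ x, t = s ++ [x] := by
            obtain ⟨r, hr⟩ := h2.2
            have hr1 : r.length = 1 := by
              have := congrArg List.length hr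
              simp at this
              omega
            obtain ⟨x, rfl⟩ := List.length_eq_one_iff.mp hr1
            exact ⟨x, hr.symm⟩
          have hch : ∀ y : X, P (s ++ [x] ++ [y]) = v x := by
            intro y
            rw [hP]; dsimp only
            rw [if_pos ⟨by simp, (List.prefix_append _ _).trans (List.prefix_append _ _)⟩,
              List.getD_append _ _ _ _ (by simp), getD_concat_self]
          have hPt : P (s ++ [x]) = M (s ++ [x]) := by
            rw [hP]; dsimp only
            rw [if_neg (fun h => by have := h.1; simp at this)]
          calc Q (s ++ [x]) (fun y => P (s ++ [x] ++ [y]))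
              = Q (s ++ [x]) (fun _ => v x) := by congr 1; funext y; exact hch y
          _ ≤ v x := Q_const_le _ (hQ _) (hv3 x)
          _ ≤ M (s ++ [x]) := hv2 x
          _ = P (s ++ [x]) := hPt.symm
        · have hch : ∀ y : X, P (t ++ [y]) = M (t ++ [y]) := by
            intro y
            rw [hP]; dsimp only
            rw [if_neg]
            rintro ⟨ha, hb'⟩
            have ha' : s.length + 1 < t.length + 1 := by simpa using ha
            rcases prefix_concat_cases hb' with h3 | h3
            · rcases Nat.lt_or_ge (s.length + 1) t.length with h4 | h4
              · exact h1 ⟨h4, h3⟩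
              · have h5 : t.length = s.length + 1 := by
                  have := h3.length_le; omega
                exact h2 ⟨h5, h3⟩
            · have := congrArg List.length h3
              simp at this
              omega
          have hPt : P t = M t := by rw [hP]; dsimp only; rw [if_neg h1]
          calc Q t (fun y => P (t ++ [y])) = Q t (fun y => M (t ++ [y])) := by
                congr 1; funext y; exact hch y
          _ ≤ M t := hMs t
          _ = P t := hPt.symm
    obtain ⟨Bv, hBv⟩ := bddBelowF_of_finite hv3
    have hPb : BddBelowP P := by
      refine ⟨min B Bv, fun t => ?_⟩
      rw [hP]; dsimp only
      split_ifs with h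
      · exact le_trans (by exact_mod_cast min_le_right B Bv) (hBv _)
      · exact le_trans (by exact_mod_cast min_le_left B Bv) (hB t)
    have hPg : ∀ ω ∈ Gamma s, upExp Q f (s ++ [ω s.length]) ≤ liminfP P ω := by
      intro ω hω
      refine le_trans (hv1 (ω s.length)) ?_
      simp only [liminfP]
      refine le_liminf_of_le (by isBoundedDefault) ?_
      filter_upwards [Filter.eventually_ge_atTop (s.length + 2)] with m hm
      have hpre : s <+: pfx ω m := by
        have h6 := pfx_prefix ω (show s.length ≤ m by omega)
        rwa [mem_Gamma_iff.mp hω] at h6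
      rw [hP]; dsimp only
      rw [if_pos ⟨by rw [pfx_length]; omega, hpre⟩, pfx_getD ω (by omega) d]
    have hPval : P s = M s := by
      rw [hP]; dsimp only; rw [if_neg (fun h => by have := h.1; omega)]
    exact sInf_le ⟨P, hPs, hPb, hPg, hPval⟩
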